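/- For every n ≥ 2 and every rational m, the resultant of f_m^{(n)}(X) and f_m^{(n−1)}(X) equals (m²+m+1)^{n−1}·3^{(n−1)(n−2)/2}·(−1)^{n(n−1)/2}. -/

import Mathlib

open Polynomial

/-- h(i) = 0, -1, -1, 0, 1, 1 according as i = 0,1,2,3,4,5 (mod 6). -/
def hcoef (i : ℕ) : ℤ :=
  match i % 6 with
  | 0 => 0 | 1 => -1 | 2 => -1 | 3 => 0 | 4 => 1 | _ => 1

/-- g(i) = 1, -m, -m-1, -1, m, m+1 according as i = 0,1,2,3,4,5 (mod 6). -/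
def gcoef (m : ℚ) (i : ℕ) : ℚ :=
  match i % 6 with
  | 0 => 1 | 1 => -m | 2 => -m - 1 | 3 => -1 | 4 => m | _ => m + 1

/-- f_m^{(n)}(X) = sum_{i=0}^n C(n,i) X^i g(n-i). -/
noncomputable def fpol (m : ℚ) (n : ℕ) : ℚ[X] :=
  ∑ i ∈ Finset.range (n + 1), C ((n.choose i : ℚ) * gcoef m (n - i)) * X ^ i

/-- r^{(n)}(X) = sum_{i=0}^n C(n,i) X^i h(n-i). -/
noncomputable def rpol (n : ℕ) : ℤ[X] :=
  ∑ i ∈ Finset.range (n + 1), C ((n.choose i : ℤ) * hcoef (n - i)) * X ^ i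

/-- Sylvester matrix of `f` (regarded as of degree `m`) and `g` (regarded as of
degree `n`): the first `n` rows contain the coefficients of `f` (in decreasing
order, shifted), the last `m` rows those of `g`. -/
def sylvester {R : Type*} [CommRing R] (m n : ℕ) (f g : R[X]) :
    Matrix (Fin (n + m)) (Fin (n + m)) R :=
  Matrix.of fun i j =>
    if (i : ℕ) < n then
      (if (i : ℕ) ≤ (j : ℕ) ∧ (j : ℕ) ≤ (i : ℕ) + m then f.coeff (m + i - j) else 0)
    else
      (if (i : ℕ) - n ≤ (j : ℕ) ∧ (j : ℕ) ≤ ((i : ℕ) - n) + n then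
        g.coeff (n + ((i : ℕ) - n) - j) else 0)

/-- The resultant of `f` (of degree `m`) and `g` (of degree `n`), as the
determinant of the Sylvester matrix. -/
def res {R : Type*} [CommRing R] (m n : ℕ) (f g : R[X]) : R :=
  (sylvester m n f g).det

-- KEY coefficient lemma
lemma key_coeff (f g : ℚ[X]) (d e : ℕ) (hf : f.Monic) (hd : f.natDegree = d)
    (hg : g.natDegree ≤ e) (i' jj : ℕ) (hi' : i' < d) (hjj : jj < e + d) :
    (if i' ≤ jj ∧ jj ≤ i' + e then g.coeff (e + i' - jj) else 0)
      = (∑ t ∈ Finset.range e, ((X ^ (d - 1 - i') * g) /ₘ f).coeff (e - 1 - t) *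
          (if t ≤ jj ∧ jj ≤ t + d then f.coeff (d + t - jj) else 0))
        + (if e ≤ jj then ((X ^ (d - 1 - i') * g) %ₘ f).coeff (d - 1 - (jj - e)) else 0) := by
  have hfne : f ≠ 0 := hf.ne_zero
  set a : ℚ[X] := X ^ (d - 1 - i') * g with ha
  set q : ℚ[X] := a /ₘ f with hq
  set r : ℚ[X] := a %ₘ f with hr
  set u : ℕ := e + d - 1 - jj with hu
  have hda : a.natDegree ≤ d - 1 - i' + e := by
    refine (natDegree_mul_le).trans ?_
    simp [natDegree_X_pow]; omega
  -- coefficients of f vanish above d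
  have hfc : ∀ k, d < k → f.coeff k = 0 := fun k hk =>
    coeff_eq_zero_of_natDegree_lt (by omega)
  have hgc : ∀ k, e < k → g.coeff k = 0 := fun k hk =>
    coeff_eq_zero_of_natDegree_lt (by omega)
  -- step a : LHS = a.coeff u
  have stepa : (if i' ≤ jj ∧ jj ≤ i' + e then g.coeff (e + i' - jj) else 0) = a.coeff u := by
    rw [ha, mul_comm, coeff_mul_X_pow']
    by_cases h1 : i' ≤ jj ∧ jj ≤ i' + e
    · rw [if_pos h1, if_pos (by omega)]
      congr 1; omega
    · rw [if_neg h1]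
      rcases Nat.lt_or_ge jj i' with h2 | h2
      · rw [if_pos (by omega)]
        exact (hgc _ (by omega)).symm
      · have h3 : i' + e < jj := by omega
        rw [if_neg (by omega)]
  -- q coefficients vanish above e-1
  have hqc : ∀ k, e ≤ k → q.coeff k = 0 := by
    intro k hk
    rcases Nat.lt_or_ge a.natDegree d with h1 | h1
    · have : q = 0 := by
        rw [hq, Polynomial.divByMonic_eq_zero_iff hf]
        exact lt_of_le_of_lt (degree_le_natDegree) (by
          rw [degree_eq_natDegree hfne] at *
          exact_mod_cast (by omega : (a.natDegree : ℤ) < (f.natDegree : ℤ)) )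
      simp [this]
    · apply coeff_eq_zero_of_natDegree_lt
      rw [hq, natDegree_divByMonic a hf]
      omega
  have hau : a = r + f * q := (Polynomial.modByMonic_add_div a f).symm
  -- r coeff vanish above d-1
  have hrc : ∀ k, d ≤ k → r.coeff k = 0 := by
    intro k hk
    rcases Nat.eq_zero_or_pos d with rfl | hdpos
    · have hf1 : f = 1 := hf.natDegree_eq_zero.mp hd
      simp [hr, hf1]
    · apply coeff_eq_zero_of_natDegree_lt
      have h2 : r.natDegree < d := by
        rw [hr, ← hd]
        exact Polynomial.natDegree_modByMonic_lt a hf (fun h => by simp [h] at hd; omega)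
      omega
  -- step d : sum identity
  have stepd : (∑ t ∈ Finset.range e, q.coeff (e - 1 - t) *
      (if t ≤ jj ∧ jj ≤ t + d then f.coeff (d + t - jj) else 0)) = (f * q).coeff u := by
    have hqsum : f * q = ∑ v ∈ Finset.range e, C (q.coeff v) * (f * X ^ v) := by
      conv_lhs => rw [show q = ∑ v ∈ Finset.range e, C (q.coeff v) * X ^ v by
        ext k
        rw [finset_sum_coeff]
        simp only [coeff_C_mul, coeff_X_pow, mul_ite, mul_one, mul_zero]
        rw [Finset.sum_ite_eq (Finset.range e) k]
        by_cases hke : k < e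
        · simp [Finset.mem_range.mpr hke]
        · simp [hke, hqc k (by omega)]]
      rw [Finset.mul_sum]
      congr 1; ext v; ring
    rw [hqsum, finset_sum_coeff]
    refine Eq.trans ?_ (Finset.sum_range_reflect (fun v => (C (q.coeff v) * (f * X ^ v)).coeff u) e)
    apply Finset.sum_congr rfl
    intro t ht
    have ht' : t < e := Finset.mem_range.mp ht
    rw [coeff_C_mul, coeff_mul_X_pow']
    by_cases h2 : t ≤ jj ∧ jj ≤ t + d
    · rw [if_pos h2, if_pos (by omega)]
      congr 2; omega
    · rw [if_neg h2]
      rcases Nat.lt_or_ge jj (t + d + 1) with h3 | h3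
      · have h4 : jj < t := by omega
        rw [if_pos (by omega), hfc _ (by omega)]
      · rw [if_neg (by omega)]
  -- step c
  have stepc : (if e ≤ jj then r.coeff (d - 1 - (jj - e)) else 0) = r.coeff u := by
    by_cases h1 : e ≤ jj
    · rw [if_pos h1]; congr 1; omega
    · rw [if_neg h1, hrc u (by omega)]
  rw [stepa, stepd, stepc, hau]
  rw [coeff_add]; ring

noncomputable def nrm (f : ℚ[X]) (hf : f.Monic) (g : ℚ[X]) : ℚ :=
  (LinearMap.toMatrix (AdjoinRoot.powerBasisAux' hf) (AdjoinRoot.powerBasisAux' hf)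
    (LinearMap.mulLeft ℚ (AdjoinRoot.mk f g))).det

lemma nrm_mul (f : ℚ[X]) (hf : f.Monic) (g h : ℚ[X]) :
    nrm f hf (g * h) = nrm f hf g * nrm f hf h := by
  unfold nrm
  have h1 : (AdjoinRoot.mk f) (g * h) = (AdjoinRoot.mk f) g * (AdjoinRoot.mk f) h :=
    map_mul _ _ _
  rw [h1, LinearMap.mulLeft_mul,
    LinearMap.toMatrix_comp _ (AdjoinRoot.powerBasisAux' hf) _, Matrix.det_mul]

lemma nrm_congr (f : ℚ[X]) (hf : f.Monic) (g g' : ℚ[X]) (hdvd : f ∣ g - g') :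
    nrm f hf g = nrm f hf g' := by
  unfold nrm
  rw [AdjoinRoot.mk_eq_mk.mpr hdvd]

lemma nrm_C (f : ℚ[X]) (hf : f.Monic) (c : ℚ) : nrm f hf (C c) = c ^ f.natDegree := by
  unfold nrm
  have h2 : LinearMap.mulLeft ℚ ((AdjoinRoot.mk f) (C c)) = c • LinearMap.id := by
    ext x
    have h1 : (AdjoinRoot.mk f) (C c) = algebraMap ℚ _ c := rfl
    simp [h1, Algebra.smul_def]
  rw [h2, map_smul, LinearMap.toMatrix_id, Matrix.det_smul, Matrix.det_one, mul_one]
  simp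

lemma res_eq_nrm (d e : ℕ) (f g : ℚ[X]) (hf : f.Monic) (hd : f.natDegree = d)
    (hg : g.natDegree ≤ e) : res d e f g = nrm f hf g := by
  subst hd
  classical
  set d := f.natDegree with hd
  set κ : Fin e ⊕ Fin d ≃ Fin (e + d) := finSumFinEquiv with hκ
  set S := sylvester d e f g with hSdef
  set A : Matrix (Fin e) (Fin e) ℚ := fun i j => S (κ (Sum.inl i)) (κ (Sum.inl j)) with hAdef
  set B : Matrix (Fin e) (Fin d) ℚ := fun i j => S (κ (Sum.inl i)) (κ (Sum.inr j)) with hBdef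
  set Cm : Matrix (Fin d) (Fin e) ℚ := fun i j => S (κ (Sum.inr i)) (κ (Sum.inl j)) with hCdef
  set D : Matrix (Fin d) (Fin d) ℚ := fun i j => S (κ (Sum.inr i)) (κ (Sum.inr j)) with hDdef
  have hS : S = (Matrix.fromBlocks A B Cm D).submatrix κ.symm κ.symm := by
    ext i j
    obtain ⟨i', rfl⟩ : ∃ i', κ i' = i := ⟨κ.symm i, Equiv.apply_symm_apply _ _⟩
    obtain ⟨j', rfl⟩ : ∃ j', κ j' = j := ⟨κ.symm j, Equiv.apply_symm_apply _ _⟩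
    rcases i' with i'|i' <;> rcases j' with j'|j' <;>
      simp only [Matrix.submatrix_apply, Equiv.symm_apply_apply,
        Matrix.fromBlocks_apply₁₁, Matrix.fromBlocks_apply₁₂, Matrix.fromBlocks_apply₂₁,
        Matrix.fromBlocks_apply₂₂] <;> rfl
  -- entry formulas
  have hA : ∀ (t j : Fin e), A t j =
      (if (t:ℕ) ≤ (j:ℕ) ∧ (j:ℕ) ≤ (t:ℕ) + d then f.coeff (d + t - j) else 0) := by
    intro t j
    simp only [hAdef, hSdef, _root_.sylvester, Matrix.of_apply, hκ, finSumFinEquiv_apply_left,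
      Fin.coe_castAdd]
    rw [if_pos (show (t:ℕ) < e from t.isLt)]
  have hB : ∀ (t : Fin e) (s : Fin d), B t s =
      (if (t:ℕ) ≤ e + (s:ℕ) ∧ e + (s:ℕ) ≤ (t:ℕ) + d then f.coeff (d + t - (e + s)) else 0) := by
    intro t s
    simp only [hBdef, hSdef, _root_.sylvester, Matrix.of_apply, hκ, finSumFinEquiv_apply_left,
      finSumFinEquiv_apply_right, Fin.coe_castAdd, Fin.coe_natAdd]
    rw [if_pos (show (t:ℕ) < e from t.isLt)]
  have hCm : ∀ (i : Fin d) (j : Fin e), Cm i j =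
      (if (i:ℕ) ≤ (j:ℕ) ∧ (j:ℕ) ≤ (i:ℕ) + e then g.coeff (e + i - j) else 0) := by
    intro i j
    simp only [hCdef, hSdef, _root_.sylvester, Matrix.of_apply, hκ, finSumFinEquiv_apply_left,
      finSumFinEquiv_apply_right, Fin.coe_castAdd, Fin.coe_natAdd]
    rw [if_neg (by omega), Nat.add_sub_cancel_left]
  have hD : ∀ (i s : Fin d), D i s =
      (if (i:ℕ) ≤ e + (s:ℕ) ∧ e + (s:ℕ) ≤ (i:ℕ) + e then g.coeff (e + i - (e + s)) else 0) := by
    intro i s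
    simp only [hDdef, hSdef, _root_.sylvester, Matrix.of_apply, hκ,
      finSumFinEquiv_apply_right, Fin.coe_natAdd]
    rw [if_neg (by omega), Nat.add_sub_cancel_left]
  set Cq : Matrix (Fin d) (Fin e) ℚ :=
    fun i t => ((X ^ (d - 1 - (i:ℕ)) * g) /ₘ f).coeff (e - 1 - t) with hCqdef
  set M : Matrix (Fin d) (Fin d) ℚ :=
    fun i s => ((X ^ (d - 1 - (i:ℕ)) * g) %ₘ f).coeff (d - 1 - s) with hMdef
  have hC2 : Cm = Cq * A := by
    ext i j
    have hkey := key_coeff f g d e hf hd.symm hg i j i.isLt (by have := j.isLt; omega)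
    rw [show (if e ≤ (j:ℕ) then ((X ^ (d - 1 - (i:ℕ)) * g) %ₘ f).coeff (d - 1 - ((j:ℕ) - e)) else 0)
        = 0 from if_neg (by have := j.isLt; omega), add_zero] at hkey
    rw [hCm i j, Matrix.mul_apply, hkey,
      ← Fin.sum_univ_eq_sum_range (fun t => ((X ^ (d - 1 - (i:ℕ)) * g) /ₘ f).coeff (e - 1 - t) *
        (if t ≤ (j:ℕ) ∧ (j:ℕ) ≤ t + d then f.coeff (d + t - j) else 0)) e]
    apply Finset.sum_congr rfl
    intro t _
    rw [hA t j]
  have hD2 : D = Cq * B + M := by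
    ext i s
    have hkey := key_coeff f g d e hf hd.symm hg i (e + s) i.isLt (by have := s.isLt; omega)
    rw [if_pos (Nat.le_add_right _ _), Nat.add_sub_cancel_left] at hkey
    rw [hD i s, Matrix.add_apply, Matrix.mul_apply, hkey,
      ← Fin.sum_univ_eq_sum_range (fun t => ((X ^ (d - 1 - (i:ℕ)) * g) /ₘ f).coeff (e - 1 - t) *
        (if t ≤ e + (s:ℕ) ∧ e + (s:ℕ) ≤ t + d then f.coeff (d + t - (e + s)) else 0)) e]
    congr 1
    apply Finset.sum_congr rfl
    intro t _
    rw [hB t s]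
  have hdetA : A.det = 1 := by
    have htri : A.BlockTriangular id := by
      intro i j hij
      rw [hA i j, if_neg (by simp at hij; omega)]
    rw [Matrix.det_of_upperTriangular htri]
    apply Finset.prod_eq_one
    intro i _
    rw [hA i i, if_pos ⟨le_refl _, by omega⟩]
    have : d + (i:ℕ) - (i:ℕ) = d := by omega
    rw [this]
    exact hf.coeff_natDegree
  -- determinant of M equals nrm
  have hdetM : M.det = nrm f hf g := by
    unfold nrm
    set T := LinearMap.toMatrix (AdjoinRoot.powerBasisAux' hf) (AdjoinRoot.powerBasisAux' hf)
      (LinearMap.mulLeft ℚ (AdjoinRoot.mk f g)) with hTdef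
    have hb : ∀ i : Fin d, (AdjoinRoot.powerBasisAux' hf) i = AdjoinRoot.root f ^ (i:ℕ) := by
      intro i
      have h3 := (AdjoinRoot.powerBasis' hf).basis_eq_pow i
      exact h3
    have hTval : ∀ s i : Fin d, T s i = ((g * X ^ (i:ℕ)) %ₘ f).coeff s := by
      intro s i
      rw [hTdef, LinearMap.toMatrix_apply, hb, LinearMap.mulLeft_apply]
      have h4 : AdjoinRoot.mk f g * AdjoinRoot.root f ^ (i:ℕ)
          = AdjoinRoot.mk f (g * X ^ (i:ℕ)) := by
        rw [map_mul, map_pow, AdjoinRoot.mk_X]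
      rw [h4, AdjoinRoot.powerBasisAux'_repr_apply_to_fun, AdjoinRoot.modByMonicHom_mk]
    have hM2 : M = (T.transpose).submatrix Fin.revPerm Fin.revPerm := by
      ext i s
      rw [hMdef]
      simp only [Matrix.submatrix_apply, Matrix.transpose_apply, Fin.revPerm_apply]
      rw [hTval]
      have h5 : ((Fin.rev i : Fin d) : ℕ) = d - 1 - (i:ℕ) := by rw [Fin.val_rev]; omega
      have h6 : ((Fin.rev s : Fin d) : ℕ) = d - 1 - (s:ℕ) := by rw [Fin.val_rev]; omega
      rw [h5, h6, mul_comm]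
    rw [hM2, Matrix.det_submatrix_equiv_self, Matrix.det_transpose]
  -- assemble
  have hfact : Matrix.fromBlocks A B Cm D =
      Matrix.fromBlocks 1 0 Cq M * Matrix.fromBlocks A B 0 1 := by
    rw [Matrix.fromBlocks_multiply, hC2, hD2]
    simp
  have : res d e f g = (Matrix.fromBlocks A B Cm D).det := by
    rw [res, ← hSdef, hS, Matrix.det_submatrix_equiv_self]
  rw [this, hfact, Matrix.det_mul, Matrix.det_fromBlocks_zero₁₂,
    Matrix.det_fromBlocks_zero₂₁, hdetA, hdetM]
  simp

lemma neg_one_pow_helper (a b : ℕ) : ((-1 : ℚ)) ^ ((a + b - 1) * b) = (-1 : ℚ) ^ (a * b) := by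
  rcases b with _ | b'
  · rfl
  · have heven : Even (b' * (b' + 1)) := Nat.even_mul_succ_self b'
    obtain ⟨k, hk⟩ := heven
    have hexp : (a + (b' + 1) - 1) * (b' + 1) = a * (b' + 1) + (k + k) := by
      have h1 : a + (b' + 1) - 1 = a + b' := by omega
      rw [h1, ← hk]; ring
    rw [hexp, pow_add]
    have : ((-1 : ℚ)) ^ (k + k) = 1 := by
      rw [← two_mul, pow_mul]; norm_num
    rw [this, mul_one]

open Fin.NatCast in
lemma finRotate_pow_apply (N' k : ℕ) (i : Fin (N' + 1)) :
    ((finRotate (N' + 1)) ^ k) i = i + (k : Fin (N' + 1)) := by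
  induction k with
  | zero => simp
  | succ k ih =>
    rw [pow_succ', Equiv.Perm.mul_apply, ih, finRotate_succ_apply]
    push_cast
    rw [add_assoc]

open Fin.NatCast in
lemma res_swap (a b : ℕ) (f g : ℚ[X]) :
    res b a g f = (-1 : ℚ) ^ (a * b) * res a b f g := by
  rcases Nat.eq_zero_or_pos (a + b) with h0 | hpos
  · have ha : a = 0 := by omega
    have hb : b = 0 := by omega
    subst ha; subst hb
    simp [res, Matrix.det_fin_zero]
  obtain ⟨N', hN'⟩ : ∃ N', a + b = N' + 1 := ⟨a + b - 1, by omega⟩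
  set ψ : Fin (a + b) ≃ Fin (N' + 1) := finCongr hN' with hψ
  set τ : Equiv.Perm (Fin (N' + 1)) := (finRotate (N' + 1)) ^ b with hτ
  set σ : Equiv.Perm (Fin (a + b)) := Equiv.permCongr ψ.symm τ with hσdef
  have hcomm : a + b = b + a := by omega
  have happ : ∀ i : Fin (a + b), σ i = ψ.symm (τ (ψ i)) := fun i => rfl
  have hval : ∀ i : Fin (a + b), ((σ i : Fin (a + b)) : ℕ) = ((i : ℕ) + b) % (N' + 1) := by
    intro i
    rw [happ, hτ]
    have h1 : ((ψ.symm (((finRotate (N' + 1)) ^ b) (ψ i)) : Fin (a + b)) : ℕ)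
        = ((((finRotate (N' + 1)) ^ b) (ψ i) : Fin (N' + 1)) : ℕ) := by
      simp [hψ]
    rw [h1, finRotate_pow_apply, Fin.val_add, Fin.val_natCast]
    have h2 : ((ψ i : Fin (N' + 1)) : ℕ) = (i : ℕ) := by simp [hψ]
    rw [h2, Nat.add_mod_mod]
  set M₀ := (sylvester a b f g).submatrix (finCongr hcomm) (finCongr hcomm) with hM₀
  have hmain : sylvester b a g f = M₀.submatrix σ id := by
    ext i j
    simp only [hM₀, _root_.sylvester, Matrix.of_apply, Matrix.submatrix_apply, finCongr_apply,
      Fin.coe_cast, id_eq]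
    by_cases hi : (i : ℕ) < a
    · have hv : ((σ i : Fin (a + b)) : ℕ) = (i : ℕ) + b := by
        rw [hval]; apply Nat.mod_eq_of_lt; omega
      rw [hv, if_pos hi, if_neg (show ¬((i : ℕ) + b < b) from by omega), Nat.add_sub_cancel]
    · have hv : ((σ i : Fin (a + b)) : ℕ) = (i : ℕ) - a := by
        rw [hval, Nat.mod_eq_sub_mod (by omega)]
        have h2 : (i : ℕ) + b - (N' + 1) = (i : ℕ) - a := by omega
        rw [h2]; apply Nat.mod_eq_of_lt; have := i.isLt; omega
      rw [hv, if_neg hi, if_pos (show (i : ℕ) - a < b from by have := i.isLt; omega)]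
  have hsign : ((Equiv.Perm.sign σ : ℤ) : ℚ) = (-1 : ℚ) ^ (a * b) := by
    rw [hσdef, Equiv.Perm.sign_permCongr, hτ, map_pow, sign_finRotate]
    push_cast
    rw [← pow_mul]
    have hN'' : N' = a + b - 1 := by omega
    rw [hN'']
    exact neg_one_pow_helper a b
  have hfin : res b a g f = ((Equiv.Perm.sign σ : ℤ) : ℚ) * M₀.det := by
    rw [res, hmain, Matrix.det_permute σ M₀]
  rw [hfin, hsign, hM₀, Matrix.det_submatrix_equiv_self]
  rfl

lemma res_congr (d e : ℕ) (f g g' : ℚ[X]) (hf : f.Monic) (hd : f.natDegree = d)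
    (hg : g.natDegree ≤ e) (hg' : g'.natDegree ≤ e) (hdvd : f ∣ g - g') :
    res d e f g = res d e f g' := by
  rw [res_eq_nrm d e f g hf hd hg, res_eq_nrm d e f g' hf hd hg', nrm_congr f hf g g' hdvd]

lemma res_mul (d e₁ e₂ : ℕ) (f g h : ℚ[X]) (hf : f.Monic) (hd : f.natDegree = d)
    (hg : g.natDegree ≤ e₁) (hh : h.natDegree ≤ e₂) :
    res d (e₁ + e₂) f (g * h) = res d e₁ f g * res d e₂ f h := by
  rw [res_eq_nrm d (e₁ + e₂) f (g * h) hf hd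
      (le_trans natDegree_mul_le (add_le_add hg hh)),
    res_eq_nrm d e₁ f g hf hd hg, res_eq_nrm d e₂ f h hf hd hh, nrm_mul]

lemma res_C' (d e : ℕ) (f : ℚ[X]) (c : ℚ) (hf : f.Monic) (hd : f.natDegree = d) :
    res d e f (C c) = c ^ d := by
  rw [res_eq_nrm d e f (C c) hf hd (by simp), nrm_C, hd]

-- gcoef values
lemma gcoef_rec (m : ℚ) (k : ℕ) : gcoef m (k + 2) = gcoef m (k + 1) - gcoef m k := by
  have h6 : k % 6 = 0 ∨ k % 6 = 1 ∨ k % 6 = 2 ∨ k % 6 = 3 ∨ k % 6 = 4 ∨ k % 6 = 5 := by omega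
  unfold gcoef
  have e2 : (k + 2) % 6 = (k % 6 + 2) % 6 := by omega
  have e1 : (k + 1) % 6 = (k % 6 + 1) % 6 := by omega
  rw [e1, e2]
  rcases h6 with h|h|h|h|h|h <;> rw [h] <;> norm_num <;> ring

noncomputable def bpol (m : ℚ) (n : ℕ) : ℚ[X] :=
  ∑ i ∈ Finset.range (n + 1), C ((n.choose i : ℚ) * gcoef m (n + 1 - i)) * X ^ i

lemma fpol_coeff (m : ℚ) (n k : ℕ) :
    (fpol m n).coeff k = (n.choose k : ℚ) * gcoef m (n - k) := by
  unfold fpol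
  rw [finset_sum_coeff]
  simp only [coeff_C_mul, coeff_X_pow, mul_ite, mul_one, mul_zero]
  rw [Finset.sum_ite_eq (Finset.range (n + 1)) k
    (fun i => ((n.choose i : ℚ) * gcoef m (n - i)))]
  by_cases hk : k ≤ n
  · rw [if_pos (Finset.mem_range.mpr (by omega))]
  · rw [if_neg (by simp; omega), Nat.choose_eq_zero_of_lt (by omega)]
    simp

lemma bpol_coeff (m : ℚ) (n k : ℕ) :
    (bpol m n).coeff k = (n.choose k : ℚ) * gcoef m (n + 1 - k) := by
  unfold bpol
  rw [finset_sum_coeff]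
  simp only [coeff_C_mul, coeff_X_pow, mul_ite, mul_one, mul_zero]
  rw [Finset.sum_ite_eq (Finset.range (n + 1)) k
    (fun i => ((n.choose i : ℚ) * gcoef m (n + 1 - i)))]
  by_cases hk : k ≤ n
  · rw [if_pos (Finset.mem_range.mpr (by omega))]
  · rw [if_neg (by simp; omega), Nat.choose_eq_zero_of_lt (by omega)]
    simp

lemma fpol_natDegree_le (m : ℚ) (n : ℕ) : (fpol m n).natDegree ≤ n := by
  rw [natDegree_le_iff_coeff_eq_zero]
  intro N hN
  rw [fpol_coeff, Nat.choose_eq_zero_of_lt hN]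
  simp

lemma gcoef_zero (m : ℚ) : gcoef m 0 = 1 := rfl

lemma fpol_monic (m : ℚ) (n : ℕ) : (fpol m n).Monic := by
  apply monic_of_natDegree_le_of_coeff_eq_one n (fpol_natDegree_le m n)
  rw [fpol_coeff, Nat.choose_self, Nat.sub_self, gcoef_zero]
  norm_num

lemma fpol_natDegree (m : ℚ) (n : ℕ) : (fpol m n).natDegree = n := by
  refine le_antisymm (fpol_natDegree_le m n) (le_natDegree_of_ne_zero ?_)
  rw [fpol_coeff, Nat.choose_self, Nat.sub_self, gcoef_zero]
  norm_num

lemma fpol_succ (m : ℚ) (n : ℕ) : fpol m (n + 1) = X * fpol m n + bpol m n := by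
  ext k
  rw [coeff_add, fpol_coeff, bpol_coeff]
  rcases k with _ | k
  · simp [mul_coeff_zero, coeff_X_zero]
  · rw [coeff_X_mul, fpol_coeff]
    have h1 : n + 1 - (k + 1) = n - k := by omega
    rw [h1, Nat.choose_succ_succ]
    push_cast
    ring

lemma bpol_succ (m : ℚ) (n : ℕ) :
    bpol m (n + 1) = X * bpol m n + bpol m n - fpol m n := by
  ext k
  rw [coeff_sub, coeff_add, bpol_coeff, bpol_coeff, fpol_coeff]
  rcases k with _ | k
  · simp only [mul_coeff_zero, coeff_X_zero, zero_mul, zero_add,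
      Nat.choose_zero_right, Nat.cast_one, one_mul]
    have h1 : n + 1 + 1 - 0 = (n - 0) + 2 := by omega
    have h2 : n + 1 - 0 = (n - 0) + 1 := by omega
    rw [h1, h2, gcoef_rec]
  · rw [coeff_X_mul, bpol_coeff]
    have h1 : n + 1 + 1 - (k + 1) = n + 1 - k := by omega
    rw [h1, Nat.choose_succ_succ]
    rcases le_or_gt (k + 1) n with h | h
    · have h2 : n + 1 - k = (n - (k + 1)) + 2 := by omega
      have h3 : n + 1 - (k + 1) = (n - (k + 1)) + 1 := by omega
      rw [h2, h3, gcoef_rec]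
      push_cast
      ring
    · rcases Nat.eq_or_lt_of_le (by omega : n ≤ k) with h4 | h4
      · subst h4
        simp [Nat.choose_succ_self, Nat.sub_self]
      · rw [Nat.choose_eq_zero_of_lt h4, Nat.choose_eq_zero_of_lt (by omega)]
        push_cast
        ring

lemma fpol_rec (m : ℚ) (n : ℕ) :
    fpol m (n + 2) = (C 2 * X + 1) * fpol m (n + 1) - (X ^ 2 + X + 1) * fpol m n := by
  have h1 := fpol_succ m (n + 1)
  have h2 := bpol_succ m n
  have h3' : bpol m n = fpol m (n + 1) - X * fpol m n := by rw [fpol_succ m n]; ring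
  rw [h1, h2, h3']
  have h4 : C (2 : ℚ) = (2 : ℚ[X]) := by
    have h5 : (2 : ℚ) = 1 + 1 := by norm_num
    rw [h5, C_add, C_1]
    norm_num
  rw [h4]
  ring

lemma gcoef_one (m : ℚ) : gcoef m 1 = -m := rfl
lemma gcoef_two (m : ℚ) : gcoef m 2 = -m - 1 := rfl

lemma p_monic : (X ^ 2 + X + 1 : ℚ[X]).Monic := by
  apply monic_of_natDegree_le_of_coeff_eq_one 2
  · compute_degree
  · simp [coeff_X, coeff_one]

lemma p_natDegree : (X ^ 2 + X + 1 : ℚ[X]).natDegree = 2 := by compute_degree!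

lemma res_base1 (m : ℚ) : res 2 1 (fpol m 2) (fpol m 1) = -(m ^ 2 + m + 1) := by
  have c22 : (fpol m 2).coeff 2 = 1 := by
    rw [fpol_coeff]; norm_num [gcoef_zero]
  have c21 : (fpol m 2).coeff 1 = -(2 * m) := by
    rw [fpol_coeff]; norm_num [gcoef_one]
  have c20 : (fpol m 2).coeff 0 = -m - 1 := by
    rw [fpol_coeff]; norm_num [gcoef_two]
  have c11 : (fpol m 1).coeff 1 = 1 := by
    rw [fpol_coeff]; norm_num [gcoef_zero]
  have c10 : (fpol m 1).coeff 0 = -m := by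
    rw [fpol_coeff]; norm_num [gcoef_one]
  have hM : sylvester 2 1 (fpol m 2) (fpol m 1) =
      !![1, -(2*m), -m-1; 1, -m, 0; 0, 1, -m] := by
    ext i j
    fin_cases i <;> fin_cases j <;>
      norm_num [_root_.sylvester, c22, c21, c20, c11, c10]
  rw [res, hM, Matrix.det_fin_three]
  simp
  ring

lemma res_base2 (m : ℚ) : res 2 1 (X ^ 2 + X + 1 : ℚ[X]) (fpol m 1) = m ^ 2 + m + 1 := by
  have p2 : (X ^ 2 + X + 1 : ℚ[X]).coeff 2 = 1 := by simp [coeff_X, coeff_one]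
  have p1 : (X ^ 2 + X + 1 : ℚ[X]).coeff 1 = 1 := by simp [coeff_X, coeff_one]
  have p0 : (X ^ 2 + X + 1 : ℚ[X]).coeff 0 = 1 := by simp [coeff_X, coeff_one]
  have c11 : (fpol m 1).coeff 1 = 1 := by
    rw [fpol_coeff]; norm_num [gcoef_zero]
  have c10 : (fpol m 1).coeff 0 = -m := by
    rw [fpol_coeff]; norm_num [gcoef_one]
  have hM : sylvester 2 1 (X ^ 2 + X + 1 : ℚ[X]) (fpol m 1) =
      !![1, 1, 1; 1, -m, 0; 0, 1, -m] := by
    ext i j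
    fin_cases i <;> fin_cases j <;>
      norm_num [_root_.sylvester, p2, p1, p0, c11, c10, coeff_X, coeff_one]
  rw [res, hM, Matrix.det_fin_three]
  simp
  ring

lemma res_base3 : res 2 1 (X ^ 2 + X + 1 : ℚ[X]) (C 2 * X + 1) = 3 := by
  have p2 : (X ^ 2 + X + 1 : ℚ[X]).coeff 2 = 1 := by simp [coeff_X, coeff_one]
  have p1 : (X ^ 2 + X + 1 : ℚ[X]).coeff 1 = 1 := by simp [coeff_X, coeff_one]
  have p0 : (X ^ 2 + X + 1 : ℚ[X]).coeff 0 = 1 := by simp [coeff_X, coeff_one]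
  have c11 : (C 2 * X + 1 : ℚ[X]).coeff 1 = 2 := by simp [coeff_X, coeff_one]
  have c10 : (C 2 * X + 1 : ℚ[X]).coeff 0 = 1 := by simp [coeff_X, coeff_one]
  have hM : sylvester 2 1 (X ^ 2 + X + 1 : ℚ[X]) (C 2 * X + 1 : ℚ[X]) =
      !![1, 1, 1; 2, 1, 0; 0, 2, 1] := by
    ext i j
    fin_cases i <;> fin_cases j <;>
      norm_num [_root_.sylvester, p2, p1, p0, c11, c10, coeff_X, coeff_one]
  rw [res, hM, Matrix.det_fin_three]
  simp
  norm_num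

lemma resQ (m : ℚ) (j : ℕ) :
    res 2 (j + 1) (X ^ 2 + X + 1 : ℚ[X]) (fpol m (j + 1)) = 3 ^ j * (m ^ 2 + m + 1) := by
  induction j with
  | zero => simpa using res_base2 m
  | succ j ih =>
    have hdvd : (X ^ 2 + X + 1 : ℚ[X]) ∣ fpol m (j + 2) - (C 2 * X + 1) * fpol m (j + 1) :=
      ⟨-fpol m j, by rw [fpol_rec m j]; ring⟩
    have h1 : res 2 (j + 2) (X ^ 2 + X + 1 : ℚ[X]) (fpol m (j + 2))
        = res 2 (j + 2) (X ^ 2 + X + 1 : ℚ[X]) ((C 2 * X + 1) * fpol m (j + 1)) :=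
      res_congr 2 (j + 2) _ _ _ p_monic p_natDegree
        (fpol_natDegree_le m (j + 2))
        (le_trans natDegree_mul_le (by
          have h2 := fpol_natDegree_le m (j + 1)
          have h3 : (C 2 * X + 1 : ℚ[X]).natDegree ≤ 1 := by compute_degree
          omega)) hdvd
    have h6 : res 2 (1 + (j + 1)) (X ^ 2 + X + 1 : ℚ[X]) ((C 2 * X + 1) * fpol m (j + 1))
        = res 2 1 (X ^ 2 + X + 1 : ℚ[X]) (C 2 * X + 1)
          * res 2 (j + 1) (X ^ 2 + X + 1 : ℚ[X]) (fpol m (j + 1)) :=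
      res_mul 2 1 (j + 1) _ _ _ p_monic p_natDegree (by compute_degree)
        (fpol_natDegree_le m (j + 1))
    rw [show j + 1 + 1 = j + 2 from by omega, h1, show j + 2 = 1 + (j + 1) from by omega,
      h6, res_base3, ih]
    ring

lemma main_lemma (m : ℚ) (j : ℕ) :
    res (j + 2) (j + 1) (fpol m (j + 2)) (fpol m (j + 1))
      = (m ^ 2 + m + 1) ^ (j + 1) * 3 ^ ((j + 1) * j / 2) * (-1) ^ ((j + 2) * (j + 1) / 2) := by
  induction j with
  | zero =>
    rw [res_base1]
    norm_num
  | succ j ih =>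
    -- exponent identities
    have e3 : (j + 1 + 1) * (j + 1) / 2 = (j + 1) * j / 2 + (j + 1) := by
      obtain ⟨t, ht⟩ := Nat.even_mul_succ_self j
      have h5 : (j + 1 + 1) * (j + 1) = j * (j + 1) + 2 * (j + 1) := by ring
      have hQ : (j + 1) * j = j * (j + 1) := by ring
      omega
    have e4 : (j + 1 + 2) * (j + 1 + 1) / 2 = (j + 1 + 1) * (j + 1) / 2 + (j + 1 + 1) := by
      obtain ⟨t, ht⟩ := Nat.even_mul_succ_self (j + 1)
      have h5 : (j + 1 + 2) * (j + 1 + 1) = (j + 1) * (j + 1 + 1) + 2 * (j + 1 + 1) := by ring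
      have hQ : (j + 1 + 1) * (j + 1) = (j + 1) * (j + 1 + 1) := by ring
      omega
    have e5 : (j + 2) * (j + 1) / 2 = (j + 1) * j / 2 + (j + 1) := by
      obtain ⟨t, ht⟩ := Nat.even_mul_succ_self j
      have h5 : (j + 2) * (j + 1) = j * (j + 1) + 2 * (j + 1) := by ring
      have hQ : (j + 1) * j = j * (j + 1) := by ring
      omega
    rw [e5] at ih
    rw [e4, e3]
    have hb1 : (C (-1) * (X ^ 2 + X + 1) : ℚ[X]).natDegree ≤ 2 := by compute_degree
    have h1 := res_swap (j + 1 + 1) (j + 1 + 2) (fpol m (j + 1 + 1)) (fpol m (j + 1 + 2))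
    rw [h1, show ((-1 : ℚ) ^ ((j + 1 + 1) * (j + 1 + 2))) = 1 from
      Even.neg_one_pow (Nat.even_mul_succ_self (j + 1 + 1)), one_mul]
    rw [res_congr (j + 1 + 1) (j + 1 + 2) (fpol m (j + 1 + 1)) (fpol m (j + 1 + 2))
      ((C (-1) * (X ^ 2 + X + 1)) * fpol m (j + 1)) (fpol_monic m (j + 1 + 1))
      (fpol_natDegree m (j + 1 + 1)) (fpol_natDegree_le m (j + 1 + 2))
      (le_trans natDegree_mul_le (by
        have h7 := fpol_natDegree_le m (j + 1)
        omega))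
      ⟨C 2 * X + 1, by rw [fpol_rec m (j + 1)]; simp only [C_neg, C_1]; ring⟩]
    rw [show j + 1 + 2 = 2 + (j + 1) from by omega]
    rw [res_mul (j + 1 + 1) 2 (j + 1) (fpol m (j + 1 + 1)) (C (-1) * (X ^ 2 + X + 1))
      (fpol m (j + 1)) (fpol_monic m (j + 1 + 1)) (fpol_natDegree m (j + 1 + 1)) hb1
      (fpol_natDegree_le m (j + 1))]
    have h4 : res (j + 1 + 1) 2 (fpol m (j + 1 + 1)) (C (-1) * (X ^ 2 + X + 1))
        = res (j + 1 + 1) 0 (fpol m (j + 1 + 1)) (C (-1))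
          * res (j + 1 + 1) 2 (fpol m (j + 1 + 1)) (X ^ 2 + X + 1) :=
      res_mul (j + 1 + 1) 0 2 (fpol m (j + 1 + 1)) (C (-1)) (X ^ 2 + X + 1)
        (fpol_monic m (j + 1 + 1)) (fpol_natDegree m (j + 1 + 1)) (by simp) (by compute_degree)
    rw [h4, res_C' (j + 1 + 1) 0 (fpol m (j + 1 + 1)) (-1) (fpol_monic m (j + 1 + 1))
      (fpol_natDegree m (j + 1 + 1))]
    have h5 := res_swap 2 (j + 1 + 1) (X ^ 2 + X + 1 : ℚ[X]) (fpol m (j + 1 + 1))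
    rw [h5, show ((-1 : ℚ) ^ (2 * (j + 1 + 1))) = 1 from
      Even.neg_one_pow (even_two_mul _), one_mul]
    rw [resQ m (j + 1), ih]
    ring

theorem stmt14 (n : ℕ) (hn : 2 ≤ n) (m : ℚ) :
    res n (n - 1) (fpol m n) (fpol m (n - 1)) =
      (m ^ 2 + m + 1) ^ (n - 1) * 3 ^ ((n - 1) * (n - 2) / 2) *
        (-1) ^ (n * (n - 1) / 2) := by
  obtain ⟨j, rfl⟩ : ∃ j, n = j + 2 := ⟨n - 2, by omega⟩
  have h1 : j + 2 - 1 = j + 1 := by omega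
  have h2 : j + 2 - 2 = j := by omega
  rw [h1, h2]
  exact main_lemma m j
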